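/- arXiv:1407.7179 — 3 statements merged into one kernel-verified Lean document; each statement's English description precedes it below -/
import Mathlib

section
/- Let ω be a majorant and let f : 𝔹ⁿ → ℝ be continuously differentiable. If there is C > 0 such that |∇f(x)| ≤ C·ω(1/(1−|x|)) for all x ∈ 𝔹ⁿ, then there is a constant C' > 0 (one may take C' = πC√n) such that for all distinct x, y ∈ 𝔹ⁿ, |f(x) − f(y)| ≤ C'·|x−y|·ω(1/√((1−|x|)(1−|y|))). -/
open MeasureTheory Metric Set

noncomputable section

/-- A majorant: continuous, increasing, vanishing at 0, with `t ↦ ω t / t` non-increasing. -/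
def Majorant (ω : ℝ → ℝ) : Prop :=
  ContinuousOn ω (Set.Ici 0) ∧ MonotoneOn ω (Set.Ici 0) ∧ ω 0 = 0 ∧
    AntitoneOn (fun t => ω t / t) (Set.Ioi 0)

private lemma aux_log {a b : ℝ} (ha : 0 < a) (hab : a ≤ b) :
    Real.sqrt (a * b) * (Real.log b - Real.log a) ≤ 2 * (b - a) := by
  have hb : 0 < b := lt_of_lt_of_le ha hab
  set sa := Real.sqrt a with hsa
  set sb := Real.sqrt b with hsb
  have hsa0 : 0 < sa := Real.sqrt_pos.mpr ha
  have hsb0 : 0 < sb := Real.sqrt_pos.mpr hb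
  have hsab : sa ≤ sb := Real.sqrt_le_sqrt hab
  have hsa2 : sa ^ 2 = a := Real.sq_sqrt ha.le
  have hsb2 : sb ^ 2 = b := Real.sq_sqrt hb.le
  have hmul : Real.sqrt (a * b) = sa * sb := Real.sqrt_mul ha.le b
  have hlog : Real.log b - Real.log a = 2 * Real.log (sb / sa) := by
    rw [Real.log_div hsb0.ne' hsa0.ne', hsa, hsb, Real.log_sqrt ha.le, Real.log_sqrt hb.le]
    ring
  have h2 : Real.log (sb / sa) ≤ sb / sa - 1 :=
    Real.log_le_sub_one_of_pos (div_pos hsb0 hsa0)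
  have h3 : sa * Real.log (sb / sa) ≤ sb - sa := by
    have := mul_le_mul_of_nonneg_left h2 hsa0.le
    calc sa * Real.log (sb / sa) ≤ sa * (sb / sa - 1) := this
      _ = sb - sa := by field_simp
  rw [hmul, hlog]
  have h4 : sa * sb * (2 * Real.log (sb / sa)) = 2 * sb * (sa * Real.log (sb / sa)) := by ring
  rw [h4]
  have h5 : 2 * sb * (sa * Real.log (sb / sa)) ≤ 2 * sb * (sb - sa) :=
    mul_le_mul_of_nonneg_left h3 (by positivity)
  calc 2 * sb * (sa * Real.log (sb / sa)) ≤ 2 * sb * (sb - sa) := h5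
    _ ≤ 2 * (b - a) := by nlinarith [mul_le_mul_of_nonneg_left hsab hsa0.le]

private lemma aux_int {a b : ℝ} (ha : 0 < a) (hb : 0 < b) :
    Real.sqrt (a * b) * ∫ t in (0:ℝ)..1, (a + t * (b - a))⁻¹ ≤ 2 := by
  have hpos : ∀ t ∈ Icc (0:ℝ) 1, 0 < a + t * (b - a) := by
    intro t ht
    nlinarith [mul_nonneg ht.1 hb.le, mul_nonneg (sub_nonneg.mpr ht.2) ha.le]
  rcases eq_or_ne a b with rfl | hab
  · simp only [sub_self, mul_zero, add_zero]
    rw [intervalIntegral.integral_const]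
    have : Real.sqrt (a * a) = a := by
      rw [Real.sqrt_mul_self ha.le]
    rw [this]
    simp only [sub_zero, one_smul]
    rw [mul_inv_cancel₀ ha.ne']
    norm_num
  · have hba : b - a ≠ 0 := sub_ne_zero.mpr (Ne.symm hab)
    have hderiv : ∀ t ∈ uIcc (0:ℝ) 1,
        HasDerivAt (fun s => Real.log (a + s * (b - a)) / (b - a)) ((a + t * (b - a))⁻¹) t := by
      intro t ht
      rw [uIcc_of_le zero_le_one] at ht
      have h1 : HasDerivAt (fun s : ℝ => a + s * (b - a)) (b - a) t := by
        simpa using ((hasDerivAt_id t).mul_const (b - a)).const_add a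
      have h2 := (h1.log (hpos t ht).ne').div_const (b - a)
      have heq : (b - a) / (a + t * (b - a)) / (b - a) = (a + t * (b - a))⁻¹ := by
        rw [div_right_comm, div_self hba, one_div]
      rw [← heq]; exact h2
    have hcont : ContinuousOn (fun t : ℝ => (a + t * (b - a))⁻¹) (Icc 0 1) := by
      apply ContinuousOn.inv₀
      · fun_prop
      · intro t ht; exact (hpos t ht).ne'
    have hint : IntervalIntegrable (fun t : ℝ => (a + t * (b - a))⁻¹) volume 0 1 := by
      apply ContinuousOn.intervalIntegrable
      rwa [uIcc_of_le zero_le_one]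
    rw [intervalIntegral.integral_eq_sub_of_hasDerivAt hderiv hint]
    simp only [one_mul, zero_mul, add_zero]
    have hsimp : a + (b - a) = b := by ring
    rw [hsimp]
    -- goal : √(a*b) * (log b / (b-a) - log a / (b-a)) ≤ 2
    have key : Real.sqrt (a * b) * (Real.log b - Real.log a) / (b - a) ≤ 2 := by
      rcases lt_or_gt_of_ne hab with h | h
      · rw [div_le_iff₀ (by linarith)]
        have := aux_log ha h.le
        linarith
      · rw [div_le_iff_of_neg (by linarith)]
        have := aux_log hb h.le
        rw [mul_comm b a] at this
        nlinarith
    calc Real.sqrt (a * b) * (Real.log b / (b - a) - Real.log a / (b - a))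
        = Real.sqrt (a * b) * (Real.log b - Real.log a) / (b - a) := by ring
      _ ≤ 2 := key

set_option maxHeartbeats 1600000 in
theorem stmt_3 {n : ℕ} (ω : ℝ → ℝ) (hω : Majorant ω)
    (f : EuclideanSpace ℝ (Fin n) → ℝ)
    (hf : ContDiffOn ℝ 1 f (ball (0 : EuclideanSpace ℝ (Fin n)) 1))
    (C : ℝ) (hC : 0 < C)
    (hgrad : ∀ x ∈ ball (0 : EuclideanSpace ℝ (Fin n)) 1,
      ‖gradient f x‖ ≤ C * ω (1 / (1 - ‖x‖))) :
    ∀ x ∈ ball (0 : EuclideanSpace ℝ (Fin n)) 1,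
      ∀ y ∈ ball (0 : EuclideanSpace ℝ (Fin n)) 1, x ≠ y →
        |f x - f y| ≤ Real.pi * C * Real.sqrt n * ‖x - y‖ *
          ω (1 / Real.sqrt ((1 - ‖x‖) * (1 - ‖y‖))) := by
  intro x hx y hy hxy
  rcases Nat.eq_zero_or_pos n with hn | hn
  · subst hn
    exact absurd (PiLp.ext fun i => i.elim0 : x = y) hxy
  have hx1 : ‖x‖ < 1 := by simpa [mem_ball_zero_iff] using hx
  have hy1 : ‖y‖ < 1 := by simpa [mem_ball_zero_iff] using hy
  set a : ℝ := 1 - ‖x‖ with ha_def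
  set b : ℝ := 1 - ‖y‖ with hb_def
  have ha : 0 < a := by simp [ha_def]; linarith
  have hb : 0 < b := by simp [hb_def]; linarith
  set G : ℝ := Real.sqrt (a * b) with hG_def
  have hG : 0 < G := Real.sqrt_pos.mpr (by positivity)
  set M : ℝ := ω (1 / G) with hM_def
  have hM : 0 ≤ M := by
    rw [hM_def, ← hω.2.2.1]
    exact hω.2.1 (Set.mem_Ici.mpr le_rfl) (Set.mem_Ici.mpr (by positivity)) (by positivity)
  set z : ℝ → EuclideanSpace ℝ (Fin n) := fun t => x + t • (y - x) with hz_def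
  set ℓ : ℝ → ℝ := fun t => a + t * (b - a) with hℓ_def
  have hℓpos : ∀ t ∈ Icc (0:ℝ) 1, 0 < ℓ t := by
    intro t ht; simp only [hℓ_def]
    nlinarith [mul_nonneg ht.1 hb.le, mul_nonneg (sub_nonneg.mpr ht.2) ha.le]
  have hzconv : ∀ t : ℝ, z t = (1 - t) • x + t • y := by
    intro t; simp only [hz_def]; module
  have hzle : ∀ t ∈ Icc (0:ℝ) 1, ℓ t ≤ 1 - ‖z t‖ := by
    intro t ht
    have h1 : ‖z t‖ ≤ (1 - t) * ‖x‖ + t * ‖y‖ := by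
      rw [hzconv t]
      calc ‖(1 - t) • x + t • y‖ ≤ ‖(1 - t) • x‖ + ‖t • y‖ := norm_add_le _ _
        _ = (1 - t) * ‖x‖ + t * ‖y‖ := by
            rw [norm_smul, norm_smul, Real.norm_eq_abs, Real.norm_eq_abs,
              abs_of_nonneg (by linarith [ht.2]), abs_of_nonneg ht.1]
    simp only [hℓ_def, ha_def, hb_def]
    nlinarith [ht.1, ht.2]
  have hzball : ∀ t ∈ Icc (0:ℝ) 1, z t ∈ ball (0 : EuclideanSpace ℝ (Fin n)) 1 := by
    intro t ht
    rw [mem_ball_zero_iff]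
    linarith [hzle t ht, hℓpos t ht]
  -- derivative of f ∘ z
  have hderiv : ∀ t ∈ uIcc (0:ℝ) 1,
      HasDerivAt (fun s => f (z s)) ((fderiv ℝ f (z t)) (y - x)) t := by
    intro t ht
    rw [uIcc_of_le zero_le_one] at ht
    have hz' : HasDerivAt z (y - x) t := by
      have : HasDerivAt (fun s : ℝ => s • (y - x)) ((1:ℝ) • (y - x)) t :=
        (hasDerivAt_id t).smul_const (y - x)
      simpa [hz_def] using this.const_add x
    have hfd : DifferentiableAt ℝ f (z t) :=
      (hf.contDiffAt (isOpen_ball.mem_nhds (hzball t ht))).differentiableAt one_ne_zero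
    exact hfd.hasFDerivAt.comp_hasDerivAt t hz'
  -- continuity of the derivative
  have hcontz : Continuous z := by fun_prop
  have hfd_cont : ContinuousOn (fun t => fderiv ℝ f (z t)) (Icc (0:ℝ) 1) :=
    (hf.continuousOn_fderiv_of_isOpen isOpen_ball le_rfl).comp hcontz.continuousOn hzball
  have hg'cont : ContinuousOn (fun t => (fderiv ℝ f (z t)) (y - x)) (Icc (0:ℝ) 1) :=
    hfd_cont.clm_apply continuousOn_const
  have hg'int : IntervalIntegrable (fun t => (fderiv ℝ f (z t)) (y - x)) volume 0 1 := by
    apply ContinuousOn.intervalIntegrable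
    rwa [uIcc_of_le zero_le_one]
  -- FTC
  have hftc : ∫ t in (0:ℝ)..1, (fderiv ℝ f (z t)) (y - x) = f y - f x := by
    rw [intervalIntegral.integral_eq_sub_of_hasDerivAt hderiv hg'int]
    simp [hz_def]
  -- pointwise bound
  have hbound : ∀ t ∈ Icc (0:ℝ) 1,
      |(fderiv ℝ f (z t)) (y - x)| ≤ C * ‖x - y‖ * M * (1 + G * (ℓ t)⁻¹) := by
    intro t ht
    have hℓt := hℓpos t ht
    have hnorm_fd : ‖fderiv ℝ f (z t)‖ = ‖gradient f (z t)‖ := by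
      rw [gradient, LinearIsometryEquiv.norm_map]
    have h1 : |(fderiv ℝ f (z t)) (y - x)| ≤ ‖fderiv ℝ f (z t)‖ * ‖y - x‖ :=
      (fderiv ℝ f (z t)).le_opNorm (y - x)
    have h2 : ‖gradient f (z t)‖ ≤ C * ω (1 / (1 - ‖z t‖)) := hgrad _ (hzball t ht)
    have hz1 : ‖z t‖ < 1 := by rw [← mem_ball_zero_iff]; exact hzball t ht
    have hzt_pos : 0 < 1 - ‖z t‖ := by linarith
    have hℓinv : (0:ℝ) < 1 / ℓ t := one_div_pos.mpr hℓt
    have hGinv : (0:ℝ) < 1 / G := one_div_pos.mpr hG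
    have h3 : ω (1 / (1 - ‖z t‖)) ≤ ω (1 / ℓ t) := by
      apply hω.2.1 (Set.mem_Ici.mpr (one_div_pos.mpr hzt_pos).le) (Set.mem_Ici.mpr hℓinv.le)
      apply one_div_le_one_div_of_le hℓt (hzle t ht)
    have h4 : ω (1 / ℓ t) ≤ (1 + G * (ℓ t)⁻¹) * M := by
      rcases le_or_gt (1 / ℓ t) (1 / G) with h | h
      · have : ω (1 / ℓ t) ≤ M := hω.2.1 (Set.mem_Ici.mpr hℓinv.le) (Set.mem_Ici.mpr hGinv.le) h
        nlinarith [mul_nonneg (mul_pos hG (inv_pos.mpr hℓt)).le hM]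
      · have hanti := hω.2.2.2 (Set.mem_Ioi.mpr hGinv) (Set.mem_Ioi.mpr hℓinv) h.le
        simp only at hanti
        rw [div_le_div_iff₀ hℓinv hGinv] at hanti
        have h5 := mul_le_mul_of_nonneg_left hanti hG.le
        have key : ω (1 / ℓ t) ≤ G * (ℓ t)⁻¹ * M := by
          calc ω (1 / ℓ t) = G * (ω (1 / ℓ t) * (1 / G)) := by field_simp
            _ ≤ G * (ω (1 / G) * (1 / ℓ t)) := h5
            _ = G * (ℓ t)⁻¹ * ω (1 / G) := by rw [one_div]; ring
            _ = G * (ℓ t)⁻¹ * M := by rw [hM_def]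
        nlinarith [key, hM]
    have hyx : ‖y - x‖ = ‖x - y‖ := norm_sub_rev y x
    calc |(fderiv ℝ f (z t)) (y - x)| ≤ ‖fderiv ℝ f (z t)‖ * ‖y - x‖ := h1
      _ = ‖gradient f (z t)‖ * ‖x - y‖ := by rw [hnorm_fd, hyx]
      _ ≤ (C * ω (1 / (1 - ‖z t‖))) * ‖x - y‖ := by
          apply mul_le_mul_of_nonneg_right h2 (norm_nonneg _)
      _ ≤ (C * ((1 + G * (ℓ t)⁻¹) * M)) * ‖x - y‖ := by
          have : ω (1 / (1 - ‖z t‖)) ≤ (1 + G * (ℓ t)⁻¹) * M := le_trans h3 h4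
          apply mul_le_mul_of_nonneg_right _ (norm_nonneg _)
          exact mul_le_mul_of_nonneg_left this hC.le
      _ = C * ‖x - y‖ * M * (1 + G * (ℓ t)⁻¹) := by ring
  -- integrate the bound
  have hℓcont : ContinuousOn (fun t : ℝ => (ℓ t)⁻¹) (Icc 0 1) := by
    apply ContinuousOn.inv₀
    · simp only [hℓ_def]; fun_prop
    · intro t ht; exact (hℓpos t ht).ne'
  have hbnd_int : IntervalIntegrable
      (fun t => C * ‖x - y‖ * M * (1 + G * (ℓ t)⁻¹)) volume 0 1 := by
    apply ContinuousOn.intervalIntegrable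
    rw [uIcc_of_le zero_le_one]
    exact continuousOn_const.mul (continuousOn_const.add (continuousOn_const.mul hℓcont))
  have habs_int : IntervalIntegrable (fun t => |(fderiv ℝ f (z t)) (y - x)|) volume 0 1 := by
    apply ContinuousOn.intervalIntegrable
    rw [uIcc_of_le zero_le_one]
    exact hg'cont.abs
  have hℓint : IntervalIntegrable (fun t : ℝ => (ℓ t)⁻¹) volume 0 1 := by
    apply ContinuousOn.intervalIntegrable
    rwa [uIcc_of_le zero_le_one]
  have hI : G * ∫ t in (0:ℝ)..1, (ℓ t)⁻¹ ≤ 2 := aux_int ha hb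
  have hInonneg : 0 ≤ ∫ t in (0:ℝ)..1, (ℓ t)⁻¹ := by
    apply intervalIntegral.integral_nonneg zero_le_one
    intro t ht; exact (inv_pos.mpr (hℓpos t ht)).le
  have step1 : |f x - f y| ≤ ∫ t in (0:ℝ)..1, |(fderiv ℝ f (z t)) (y - x)| := by
    rw [abs_sub_comm, ← hftc]
    exact intervalIntegral.abs_integral_le_integral_abs zero_le_one
  have step2 : (∫ t in (0:ℝ)..1, |(fderiv ℝ f (z t)) (y - x)|)
      ≤ ∫ t in (0:ℝ)..1, C * ‖x - y‖ * M * (1 + G * (ℓ t)⁻¹) :=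
    intervalIntegral.integral_mono_on zero_le_one habs_int hbnd_int hbound
  have step3 : (∫ t in (0:ℝ)..1, C * ‖x - y‖ * M * (1 + G * (ℓ t)⁻¹))
      = C * ‖x - y‖ * M * (1 + G * ∫ t in (0:ℝ)..1, (ℓ t)⁻¹) := by
    rw [intervalIntegral.integral_const_mul]
    congr 1
    rw [intervalIntegral.integral_add intervalIntegrable_const (hℓint.const_mul G),
      intervalIntegral.integral_const_mul]
    simp
  have step4 : C * ‖x - y‖ * M * (1 + G * ∫ t in (0:ℝ)..1, (ℓ t)⁻¹)
      ≤ C * ‖x - y‖ * M * 3 := by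
    apply mul_le_mul_of_nonneg_left (by linarith) (by positivity)
  have hxy' : 0 < ‖x - y‖ := by
    rw [norm_pos_iff]; exact sub_ne_zero.mpr hxy
  have hfin : C * ‖x - y‖ * M * 3 ≤ Real.pi * C * Real.sqrt n * ‖x - y‖ * M := by
    have hsn : (1:ℝ) ≤ Real.sqrt n := by
      rw [show (1:ℝ) = Real.sqrt 1 by simp]
      apply Real.sqrt_le_sqrt
      exact_mod_cast hn
    have hpi : (3:ℝ) ≤ Real.pi := Real.pi_gt_three.le
    have h3pi : (3:ℝ) ≤ Real.pi * Real.sqrt n := by nlinarith [Real.pi_pos]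
    calc C * ‖x - y‖ * M * 3 = 3 * (C * ‖x - y‖ * M) := by ring
      _ ≤ (Real.pi * Real.sqrt n) * (C * ‖x - y‖ * M) := by
          apply mul_le_mul_of_nonneg_right h3pi (by positivity)
      _ = Real.pi * C * Real.sqrt n * ‖x - y‖ * M := by ring
  calc |f x - f y| ≤ C * ‖x - y‖ * M * 3 := by linarith [step1, step2, step3 ▸ step2, step4]
    _ ≤ Real.pi * C * Real.sqrt n * ‖x - y‖ * M := hfin
    _ = Real.pi * C * Real.sqrt n * ‖x - y‖ * ω (1 / Real.sqrt ((1 - ‖x‖) * (1 - ‖y‖))) := by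
        rw [hM_def, hG_def, ha_def, hb_def]
end
end

section
/- Let ω be a majorant and f : 𝔹ⁿ → ℝ be continuously differentiable. If there is C > 0 such that |f(x) − f(y)| ≤ C·|x−y|·ω(1/√((1−|x|)(1−|y|))) for all distinct x, y ∈ 𝔹ⁿ, then |∇f(x)| ≤ C·ω(1/(1−|x|)) for every x ∈ 𝔹ⁿ. -/
open MeasureTheory Metric Set Filter Topology

noncomputable section

theorem stmt_4 {n : ℕ} (ω : ℝ → ℝ) (hω : Majorant ω)
    (f : EuclideanSpace ℝ (Fin n) → ℝ)
    (hf : ContDiffOn ℝ 1 f (ball (0 : EuclideanSpace ℝ (Fin n)) 1))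
    (C : ℝ) (hC : 0 < C)
    (hlip : ∀ x ∈ ball (0 : EuclideanSpace ℝ (Fin n)) 1,
      ∀ y ∈ ball (0 : EuclideanSpace ℝ (Fin n)) 1, x ≠ y →
        |f x - f y| ≤ C * ‖x - y‖ * ω (1 / Real.sqrt ((1 - ‖x‖) * (1 - ‖y‖)))) :
    ∀ x ∈ ball (0 : EuclideanSpace ℝ (Fin n)) 1,
      ‖gradient f x‖ ≤ C * ω (1 / (1 - ‖x‖)) := by
  intro x hx
  obtain ⟨hωc, hωm, hω0, _⟩ := hω
  have hx1 : ‖x‖ < 1 := by simpa using hx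
  have hxnn : (0:ℝ) ≤ ‖x‖ := norm_nonneg x
  have h1x : 0 < 1 - ‖x‖ := by linarith
  have hωnn : ∀ t, 0 ≤ t → 0 ≤ ω t := fun t ht => hω0 ▸ hωm self_mem_Ici ht ht
  set g := gradient f x with hgdef
  by_cases hg : g = 0
  · rw [hg]
    simp only [norm_zero]
    exact mul_nonneg hC.le (hωnn _ (by positivity))
  have hdiff : DifferentiableAt ℝ f x :=
    (hf.differentiableOn one_ne_zero).differentiableAt (isOpen_ball.mem_nhds hx)
  have hgrad : HasGradientAt f g x := hdiff.hasGradientAt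
  set v := ‖g‖⁻¹ • g with hvdef
  have hgn : (0:ℝ) < ‖g‖ := norm_pos_iff.mpr hg
  have hv : ‖v‖ = 1 := by
    rw [hvdef, norm_smul, norm_inv, norm_norm, inv_mul_cancel₀ hgn.ne']
  have hline : HasDerivAt (fun t : ℝ => x + t • v) v 0 := by
    simpa using ((hasDerivAt_id (0:ℝ)).smul_const v).const_add x
  have hφ : HasDerivAt (fun t : ℝ => f (x + t • v)) ‖g‖ 0 := by
    have hgrad' : HasFDerivAt f ((InnerProductSpace.toDual ℝ (EuclideanSpace ℝ (Fin n))) g) (x + (0:ℝ) • v) := by simpa using hgrad.hasFDerivAt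
    have := hgrad'.comp_hasDerivAt 0 hline
    convert this using 1
    · rfl
    · rfl
    · rfl
    simp only [InnerProductSpace.toDual_apply_apply, hvdef, real_inner_smul_right,
      real_inner_self_eq_norm_sq]
    field_simp
  have hslope : Tendsto (slope (fun t : ℝ => f (x + t • v)) 0) (𝓝[>] 0) (𝓝 ‖g‖) :=
    (hasDerivAt_iff_tendsto_slope.mp hφ).mono_left
      (nhdsWithin_mono 0 fun t ht => ne_of_gt ht)
  -- RHS tendsto
  have h1 : Tendsto (fun t : ℝ => ‖x + t • v‖) (𝓝 0) (𝓝 ‖x‖) := by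
    have hc : Continuous (fun t : ℝ => ‖x + t • v‖) := by continuity
    simpa using hc.tendsto 0
  have h2 : Tendsto (fun t : ℝ => (1 - ‖x‖) * (1 - ‖x + t • v‖))
      (𝓝 0) (𝓝 ((1 - ‖x‖) * (1 - ‖x‖))) :=
    Tendsto.mul tendsto_const_nhds (Tendsto.sub tendsto_const_nhds h1)
  have h3 : Tendsto (fun t : ℝ => Real.sqrt ((1 - ‖x‖) * (1 - ‖x + t • v‖)))
      (𝓝 0) (𝓝 (1 - ‖x‖)) := by
    have := (Real.continuous_sqrt.tendsto ((1 - ‖x‖) * (1 - ‖x‖))).comp h2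
    simpa [Function.comp_def, Real.sqrt_mul_self h1x.le] using this
  have h4 : Tendsto (fun t : ℝ => 1 / Real.sqrt ((1 - ‖x‖) * (1 - ‖x + t • v‖)))
      (𝓝 0) (𝓝 (1 / (1 - ‖x‖))) := tendsto_const_nhds.div h3 h1x.ne'
  have hωcont : ContinuousAt ω (1 / (1 - ‖x‖)) :=
    hωc.continuousAt (Ici_mem_nhds (by positivity))
  have h5 : Tendsto (fun t : ℝ => C * ω (1 / Real.sqrt ((1 - ‖x‖) * (1 - ‖x + t • v‖))))
      (𝓝[>] 0) (𝓝 (C * ω (1 / (1 - ‖x‖)))) :=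
    (tendsto_const_nhds.mul (hωcont.tendsto.comp h4)).mono_left nhdsWithin_le_nhds
  -- eventual inequality
  have hev : ∀ᶠ t in 𝓝[>] (0:ℝ),
      slope (fun t : ℝ => f (x + t • v)) 0 t ≤
        C * ω (1 / Real.sqrt ((1 - ‖x‖) * (1 - ‖x + t • v‖))) := by
    filter_upwards [Ioo_mem_nhdsGT_of_mem (show (0:ℝ) ∈ Ico 0 (1 - ‖x‖) from ⟨le_rfl, h1x⟩)]
      with t ht
    obtain ⟨ht0, ht1⟩ := ht
    set y := x + t • v with hydef
    have hyn : ‖y‖ < 1 := by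
      calc ‖y‖ ≤ ‖x‖ + ‖t • v‖ := norm_add_le _ _
        _ = ‖x‖ + t := by rw [norm_smul, hv, mul_one, Real.norm_eq_abs, abs_of_pos ht0]
        _ < 1 := by linarith
    have hy : y ∈ ball (0 : EuclideanSpace ℝ (Fin n)) 1 := by simpa using hyn
    have hvne : v ≠ 0 := by
      intro h; rw [h, norm_zero] at hv; norm_num at hv
    have hxy : x ≠ y := by
      simp only [hydef, ne_eq, left_eq_add, smul_eq_zero, not_or]
      exact ⟨ht0.ne', hvne⟩
    have hnorm : ‖x - y‖ = t := by
      rw [hydef]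
      simp [norm_smul, hv, abs_of_pos ht0]
    have hb := hlip x hx y hy hxy
    rw [hnorm] at hb
    have : slope (fun t : ℝ => f (x + t • v)) 0 t = (f y - f x) / t := by
      simp [slope, hydef, div_eq_inv_mul]
    rw [this]
    rw [div_le_iff₀ ht0]
    calc f y - f x ≤ |f y - f x| := le_abs_self _
      _ = |f x - f y| := abs_sub_comm _ _
      _ ≤ C * t * ω (1 / Real.sqrt ((1 - ‖x‖) * (1 - ‖y‖))) := hb
      _ = C * ω (1 / Real.sqrt ((1 - ‖x‖) * (1 - ‖y‖))) * t := by ring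
  exact le_of_tendsto_of_tendsto hslope h5 hev
end
end

section
/- Let ω be a majorant and f : 𝔹ⁿ → ℝ be C¹ with |∇f(x)| ≤ C·ω(1/(1−|x|)) for all x ∈ 𝔹ⁿ. Then for every x ∈ 𝔹ⁿ and r ∈ (0, 1−|x|], (1/|𝔹ⁿ(x,r)|) ∫_{𝔹ⁿ(x,r)} |f(ζ) − f(x)| dV(ζ) ≤ C' · r · ω(1/r), where C' = C√n·(Σ_{j=1}^{n} 1/j). -/
open MeasureTheory Metric Set

noncomputable section

lemma aux_integrable_k (k : ℕ) :
    IntegrableOn (fun t : ℝ => Real.exp (-t) * (1 - Real.exp (-t)) ^ k) (Ioi 0) := by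
  have hexp : IntegrableOn (fun t : ℝ => Real.exp (-(1 : ℝ) * t)) (Ioi (0:ℝ)) :=
    exp_neg_integrableOn_Ioi 0 one_pos
  refine Integrable.mono hexp ?_ ?_
  · exact (((Real.continuous_exp.comp continuous_neg).mul
      ((continuous_const.sub (Real.continuous_exp.comp continuous_neg)).pow k))).aestronglyMeasurable
  · filter_upwards [ae_restrict_mem measurableSet_Ioi] with t ht
    have h1 : 0 < Real.exp (-t) := Real.exp_pos _
    have h2 : Real.exp (-t) ≤ 1 := Real.exp_le_one_iff.mpr (by linarith [mem_Ioi.mp ht])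
    have h3 : (0:ℝ) ≤ 1 - Real.exp (-t) := by linarith
    have h4 : (1 - Real.exp (-t)) ^ k ≤ 1 := pow_le_one₀ h3 (by linarith)
    rw [Real.norm_eq_abs, Real.norm_eq_abs, abs_of_nonneg (by positivity), abs_of_nonneg (by positivity)]
    calc Real.exp (-t) * (1 - Real.exp (-t)) ^ k ≤ Real.exp (-t) * 1 := by
          exact mul_le_mul_of_nonneg_left h4 h1.le
      _ = Real.exp (-1 * t) := by rw [mul_one]; ring_nf

lemma aux_int_k (k : ℕ) :
    ∫ t in Ioi (0:ℝ), Real.exp (-t) * (1 - Real.exp (-t)) ^ k = 1 / (k + 1) := by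
  have hderiv : ∀ t ∈ Ici (0:ℝ), HasDerivAt (fun t : ℝ => (1 - Real.exp (-t)) ^ (k+1) / (k+1))
      (Real.exp (-t) * (1 - Real.exp (-t)) ^ k) t := by
    intro t _
    have h1 : HasDerivAt (fun t : ℝ => 1 - Real.exp (-t)) (Real.exp (-t)) t := by
      simpa using ((Real.hasDerivAt_exp (-t)).comp t (hasDerivAt_neg t)).const_sub 1
    have h2 := (h1.pow (k+1)).div_const ((k:ℝ)+1)
    refine (congrArg (HasDerivAt _ · t) ?_).mpr h2
    rw [Nat.add_sub_cancel]; push_cast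
    field_simp
  have htend : Filter.Tendsto (fun t : ℝ => (1 - Real.exp (-t)) ^ (k+1) / (k+1))
      Filter.atTop (nhds (1 / (k+1))) := by
    have : Filter.Tendsto (fun t : ℝ => Real.exp (-t)) Filter.atTop (nhds 0) := by
      simpa using Real.tendsto_exp_neg_atTop_nhds_zero
    have := ((this.const_sub 1).pow (k+1)).div_const ((k:ℝ)+1)
    simpa using this
  have := integral_Ioi_of_hasDerivAt_of_tendsto' hderiv (aux_integrable_k k) htend
  simpa using this

lemma aux_integrable_sum (n : ℕ) :
    IntegrableOn (fun t : ℝ => Real.exp (-t) * ∑ k ∈ Finset.range n, (1 - Real.exp (-t)) ^ k)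
      (Ioi 0) := by
  have : (fun t : ℝ => Real.exp (-t) * ∑ k ∈ Finset.range n, (1 - Real.exp (-t)) ^ k)
      = fun t : ℝ => ∑ k ∈ Finset.range n, Real.exp (-t) * (1 - Real.exp (-t)) ^ k := by
    funext t; rw [Finset.mul_sum]
  rw [this]
  exact integrable_finset_sum _ (fun k _ => aux_integrable_k k)

lemma aux_int_sum (n : ℕ) :
    ∫ t in Ioi (0:ℝ), Real.exp (-t) * ∑ k ∈ Finset.range n, (1 - Real.exp (-t)) ^ k
      = ∑ j ∈ Finset.range n, (1:ℝ) / (j + 1) := by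
  have : (fun t : ℝ => Real.exp (-t) * ∑ k ∈ Finset.range n, (1 - Real.exp (-t)) ^ k)
      = fun t : ℝ => ∑ k ∈ Finset.range n, Real.exp (-t) * (1 - Real.exp (-t)) ^ k := by
    funext t; rw [Finset.mul_sum]
  rw [this, integral_finset_sum _ (fun k _ => aux_integrable_k k)]
  exact Finset.sum_congr rfl fun k _ => aux_int_k k

lemma aux_lintegral_log_ball {n : ℕ} (hn : 0 < n) (x : EuclideanSpace ℝ (Fin n)) {r : ℝ}
    (hr : 0 < r) :
    ∫⁻ ζ in ball x r, ENNReal.ofReal (Real.log r - Real.log (r - ‖ζ - x‖)) ≤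
      ENNReal.ofReal (∑ j ∈ Finset.range n, (1:ℝ) / (j + 1)) * volume (ball x r) := by
  haveI : Nontrivial (EuclideanSpace ℝ (Fin n)) :=
    Module.nontrivial_of_finrank_pos (R := ℝ) (by rw [finrank_euclideanSpace_fin]; exact hn)
  set μ := volume.restrict (ball x r) with hμ
  set g : EuclideanSpace ℝ (Fin n) → ℝ := fun ζ => Real.log r - Real.log (r - ‖ζ - x‖) with hg
  have hmeas : Measurable g := by
    apply Measurable.sub measurable_const
    exact Real.measurable_log.comp (measurable_const.sub
      ((continuous_id.sub continuous_const).norm.measurable))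
  have hnn : 0 ≤ᵐ[μ] g := by
    filter_upwards [ae_restrict_mem measurableSet_ball] with ζ hζ
    have hd : ‖ζ - x‖ < r := by rwa [mem_ball, dist_eq_norm] at hζ
    have : Real.log (r - ‖ζ - x‖) ≤ Real.log r :=
      Real.log_le_log (by linarith [norm_nonneg (ζ - x)]) (by linarith [norm_nonneg (ζ - x)])
    simpa [hg] using sub_nonneg.mpr this
  rw [lintegral_eq_lintegral_meas_le μ hnn hmeas.aemeasurable]
  set B := volume (ball (0 : EuclideanSpace ℝ (Fin n)) 1) with hB
  have hBfin : B ≠ ⊤ := measure_ball_lt_top.ne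
  have hball : ∀ ρ : ℝ, 0 ≤ ρ → volume (ball x ρ) = ENNReal.ofReal (ρ ^ n) * B := by
    intro ρ hρ
    rw [Measure.addHaar_ball _ _ hρ, finrank_euclideanSpace_fin]
  have hmeaslevel : ∀ t ∈ Ioi (0:ℝ), μ {a | t ≤ g a} =
      ENNReal.ofReal (r ^ n * (Real.exp (-t) *
        ∑ k ∈ Finset.range n, (1 - Real.exp (-t)) ^ k)) * B := by
    intro t ht
    have ht' : 0 < t := ht
    set u := Real.exp (-t) with hu
    have hu0 : 0 < u := Real.exp_pos _
    have hu1 : u < 1 := by rw [hu, Real.exp_lt_one_iff]; linarith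
    set s := r - r * u with hs
    have hs0 : 0 < s := by nlinarith
    have hsr : s < r := by nlinarith
    have hset : {a | t ≤ g a} ∩ ball x r = ball x r \ ball x s := by
      ext ζ
      simp only [mem_inter_iff, mem_setOf_eq, mem_diff, mem_ball, dist_eq_norm]
      constructor
      · rintro ⟨h1, h2⟩
        refine ⟨h2, fun h3 => ?_⟩
        have hd0 : 0 < r - ‖ζ - x‖ := by linarith
        simp only [hg] at h1
        have : Real.log (r - ‖ζ - x‖) ≤ Real.log r - t := by linarith
        have hlog : Real.log (r - ‖ζ - x‖) ≤ Real.log (r * u) := by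
          rw [Real.log_mul hr.ne' hu0.ne', hu, Real.log_exp]; linarith
        have := (Real.log_le_log_iff hd0 (by positivity)).mp hlog
        linarith
      · rintro ⟨h2, h3⟩
        push_neg at h3
        have hd0 : 0 < r - ‖ζ - x‖ := by linarith
        refine ⟨?_, h2⟩
        have : r - ‖ζ - x‖ ≤ r * u := by linarith
        have hlog : Real.log (r - ‖ζ - x‖) ≤ Real.log (r * u) :=
          Real.log_le_log hd0 this
        rw [Real.log_mul hr.ne' hu0.ne', hu, Real.log_exp] at hlog
        simp only [hg]; linarith
    have hμset : μ {a | t ≤ g a} = volume (ball x r \ ball x s) := by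
      have hSm : MeasurableSet {a | t ≤ g a} := measurableSet_le measurable_const hmeas
      rw [hμ, Measure.restrict_apply hSm, hset]
    rw [hμset, measure_diff (ball_subset_ball hsr.le) measurableSet_ball.nullMeasurableSet
      measure_ball_lt_top.ne, hball r hr.le, hball s hs0.le]
    rw [← ENNReal.sub_mul (fun _ _ => hBfin), ← ENNReal.ofReal_sub _ (by positivity)]
    congr 2
    have hsn : s ^ n = r ^ n * (1 - u) ^ n := by
      rw [hs, show r - r * u = r * (1 - u) by ring, mul_pow]
    rw [hsn]
    linear_combination (r ^ n) * geom_sum_mul (1 - u) n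
  rw [setLIntegral_congr_fun measurableSet_Ioi
    (fun t ht => hmeaslevel t ht)]
  have hconst : ∀ t : ℝ, ENNReal.ofReal (r ^ n * (Real.exp (-t) *
        ∑ k ∈ Finset.range n, (1 - Real.exp (-t)) ^ k)) * B
      = (ENNReal.ofReal (r ^ n) * B) * ENNReal.ofReal (Real.exp (-t) *
        ∑ k ∈ Finset.range n, (1 - Real.exp (-t)) ^ k) := by
    intro t
    rw [ENNReal.ofReal_mul (by positivity)]; ring
  simp_rw [hconst]
  rw [lintegral_const_mul _ (by
    apply Measurable.ennreal_ofReal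
    exact ((Real.continuous_exp.comp continuous_neg).mul
      (continuous_finset_sum _ (fun k _ => (continuous_const.sub
        (Real.continuous_exp.comp continuous_neg)).pow k))).measurable)]
  have hnnint : 0 ≤ᵐ[volume.restrict (Ioi (0:ℝ))] fun t : ℝ => Real.exp (-t) *
      ∑ k ∈ Finset.range n, (1 - Real.exp (-t)) ^ k := by
    filter_upwards [ae_restrict_mem measurableSet_Ioi] with t ht
    have h2 : Real.exp (-t) ≤ 1 := Real.exp_le_one_iff.mpr (by linarith [mem_Ioi.mp ht])
    have h3 : (0:ℝ) ≤ 1 - Real.exp (-t) := by linarith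
    exact mul_nonneg (Real.exp_pos _).le
      (Finset.sum_nonneg fun k _ => pow_nonneg h3 k)
  rw [← ofReal_integral_eq_lintegral_ofReal (aux_integrable_sum n) hnnint, aux_int_sum n,
    hball r hr.le]
  rw [mul_comm (ENNReal.ofReal (r ^ n) * B)]

lemma aux_omega_nonneg {ω : ℝ → ℝ} (hω : Majorant ω) {t : ℝ} (ht : 0 ≤ t) : 0 ≤ ω t := by
  have := hω.2.1 (self_mem_Ici) (mem_Ici.mpr ht) ht
  rw [hω.2.2.1] at this; exact this

lemma aux_omega_scale {ω : ℝ → ℝ} (hω : Majorant ω) {a b : ℝ} (ha : 0 < a) (hab : a ≤ b) :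
    ω b ≤ (b / a) * ω a := by
  have hb : 0 < b := ha.trans_le hab
  have := hω.2.2.2 (mem_Ioi.mpr ha) (mem_Ioi.mpr hb) hab
  have h2 : ω b / b * b ≤ ω a / a * b := mul_le_mul_of_nonneg_right this hb.le
  rw [div_mul_cancel₀ _ hb.ne'] at h2
  calc ω b ≤ ω a / a * b := h2
    _ = (b / a) * ω a := by ring

lemma aux_pointwise {n : ℕ} (ω : ℝ → ℝ) (hω : Majorant ω)
    (f : EuclideanSpace ℝ (Fin n) → ℝ)
    (hf : ContDiffOn ℝ 1 f (ball (0 : EuclideanSpace ℝ (Fin n)) 1))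
    (C : ℝ) (hC : 0 < C)
    (hgrad : ∀ x ∈ ball (0 : EuclideanSpace ℝ (Fin n)) 1,
      ‖gradient f x‖ ≤ C * ω (1 / (1 - ‖x‖)))
    (x : EuclideanSpace ℝ (Fin n)) (hx : x ∈ ball (0 : EuclideanSpace ℝ (Fin n)) 1)
    {r : ℝ} (hr : 0 < r) (hr1 : r ≤ 1 - ‖x‖)
    (ζ : EuclideanSpace ℝ (Fin n)) (hζ : ζ ∈ ball x r) :
    |f ζ - f x| ≤ (C * r * ω (1 / r)) * (Real.log r - Real.log (r - ‖ζ - x‖)) := by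
  set v := ζ - x with hv
  have hρr : ‖v‖ < r := by rwa [mem_ball, dist_eq_norm] at hζ
  set ρ := ‖v‖ with hρ
  have hρ0 : 0 ≤ ρ := norm_nonneg _
  have hω1r : 0 ≤ ω (1 / r) := aux_omega_nonneg hω (by positivity)
  rcases eq_or_lt_of_le hρ0 with h0 | h0
  · -- ζ = x
    have : v = 0 := by rw [← norm_eq_zero, ← hρ, ← h0]
    have hζx : ζ = x := by rwa [hv, sub_eq_zero] at this
    rw [hζx]
    simp [← h0]
  -- main case
  set γ : ℝ → EuclideanSpace ℝ (Fin n) := fun t => x + t • v with hγ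
  have hkey : ∀ t ∈ Icc (0:ℝ) 1, ‖γ t‖ < 1 ∧ r - t * ρ ≤ 1 - ‖γ t‖ ∧ 0 < r - t * ρ := by
    intro t ht
    have h1 : ‖γ t‖ ≤ ‖x‖ + t * ρ := by
      calc ‖γ t‖ ≤ ‖x‖ + ‖t • v‖ := norm_add_le _ _
        _ = ‖x‖ + t * ρ := by rw [norm_smul, Real.norm_eq_abs, abs_of_nonneg ht.1]
    have h2 : t * ρ ≤ ρ := by nlinarith [ht.2, hρ0]
    have h3 : 0 < r - t * ρ := by nlinarith
    exact ⟨by nlinarith, by nlinarith, h3⟩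
  have hγball : ∀ t ∈ Icc (0:ℝ) 1, γ t ∈ ball (0 : EuclideanSpace ℝ (Fin n)) 1 := by
    intro t ht
    rw [mem_ball_zero_iff]
    exact (hkey t ht).1
  set d : ℝ → ℝ := fun t => fderiv ℝ f (γ t) v with hd
  have hγcont : Continuous γ := by
    exact continuous_const.add (continuous_id.smul continuous_const)
  have hder : ∀ t ∈ Icc (0:ℝ) 1, HasDerivAt (fun τ => f (γ τ)) (d t) t := by
    intro t ht
    have hdiff : DifferentiableAt ℝ f (γ t) :=
      (hf.differentiableOn one_ne_zero).differentiableAt (isOpen_ball.mem_nhds (hγball t ht))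
    have hγd : HasDerivAt γ v t := by
      simpa [hγ] using ((hasDerivAt_id t).smul_const v).const_add x
    exact hdiff.hasFDerivAt.comp_hasDerivAt t hγd
  have hfc : ContinuousOn (fderiv ℝ f) (ball (0 : EuclideanSpace ℝ (Fin n)) 1) :=
    hf.continuousOn_fderiv_of_isOpen isOpen_ball le_rfl
  have hcont_d : ContinuousOn d (Icc 0 1) := by
    have : ContinuousOn (fun t => fderiv ℝ f (γ t)) (Icc 0 1) :=
      hfc.comp hγcont.continuousOn hγball
    exact this.clm_apply continuousOn_const
  have hint : IntervalIntegrable d volume 0 1 := by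
    apply ContinuousOn.intervalIntegrable
    rwa [uIcc_of_le zero_le_one]
  have hftc : ∫ t in (0:ℝ)..1, d t = f ζ - f x := by
    have := intervalIntegral.integral_eq_sub_of_hasDerivAt
      (f := fun τ => f (γ τ)) (f' := d)
      (fun t ht => hder t (by rwa [uIcc_of_le zero_le_one] at ht)) hint
    rw [this]
    have h1 : γ 1 = ζ := by simp [hγ, hv]
    have h0' : γ 0 = x := by simp [hγ]
    rw [h1, h0']
  set φ : ℝ → ℝ := fun t => (C * r * ω (1 / r)) * (ρ / (r - t * ρ)) with hφ
  have hbound : ∀ t ∈ Icc (0:ℝ) 1, |d t| ≤ φ t := by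
    intro t ht
    obtain ⟨hb1, hb2, hb3⟩ := hkey t ht
    have hop : |d t| ≤ ‖fderiv ℝ f (γ t)‖ * ρ := by
      rw [hd]
      exact (fderiv ℝ f (γ t)).le_opNorm v
    have hgradnorm : ‖fderiv ℝ f (γ t)‖ = ‖gradient f (γ t)‖ := by
      rw [gradient]
      exact (LinearIsometryEquiv.norm_map _ _).symm
    have hgb : ‖gradient f (γ t)‖ ≤ C * ω (1 / (1 - ‖γ t‖)) := hgrad _ (hγball t ht)
    have h1γ : 0 < 1 - ‖γ t‖ := lt_of_lt_of_le hb3 hb2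
    have hmono : ω (1 / (1 - ‖γ t‖)) ≤ ω (1 / (r - t * ρ)) := by
      refine hω.2.1 (mem_Ici.mpr (by positivity)) (mem_Ici.mpr (by positivity)) ?_
      exact one_div_le_one_div_of_le hb3 hb2
    have hscale : ω (1 / (r - t * ρ)) ≤ (r / (r - t * ρ)) * ω (1 / r) := by
      have h := aux_omega_scale hω (a := 1 / r) (b := 1 / (r - t * ρ)) (by positivity)
        (one_div_le_one_div_of_le hb3 (by nlinarith [mul_nonneg ht.1 hρ0]))
      calc ω (1 / (r - t * ρ)) ≤ ((1 / (r - t * ρ)) / (1 / r)) * ω (1 / r) := h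
        _ = (r / (r - t * ρ)) * ω (1 / r) := by
            congr 1
            field_simp
    calc |d t| ≤ ‖fderiv ℝ f (γ t)‖ * ρ := hop
      _ = ‖gradient f (γ t)‖ * ρ := by rw [hgradnorm]
      _ ≤ (C * ω (1 / (1 - ‖γ t‖))) * ρ := mul_le_mul_of_nonneg_right hgb hρ0
      _ ≤ (C * ω (1 / (r - t * ρ))) * ρ := by
          apply mul_le_mul_of_nonneg_right _ hρ0
          exact mul_le_mul_of_nonneg_left hmono hC.le
      _ ≤ (C * ((r / (r - t * ρ)) * ω (1 / r))) * ρ := by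
          apply mul_le_mul_of_nonneg_right _ hρ0
          exact mul_le_mul_of_nonneg_left hscale hC.le
      _ = φ t := by rw [hφ]; ring
  have hφcont : ContinuousOn φ (Icc 0 1) := by
    apply continuousOn_const.mul
    apply continuousOn_const.div
    · exact (continuous_const.sub (continuous_id.mul continuous_const)).continuousOn
    · intro t ht
      exact (hkey t ht).2.2.ne'
  have hφint : IntervalIntegrable φ volume 0 1 := by
    apply ContinuousOn.intervalIntegrable
    rwa [uIcc_of_le zero_le_one]
  have hmono_int : ∫ t in (0:ℝ)..1, |d t| ≤ ∫ t in (0:ℝ)..1, φ t := by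
    apply intervalIntegral.integral_mono_on zero_le_one hint.abs hφint
    exact fun t ht => hbound t ht
  have habs : |∫ t in (0:ℝ)..1, d t| ≤ ∫ t in (0:ℝ)..1, |d t| :=
    intervalIntegral.abs_integral_le_integral_abs zero_le_one
  -- compute ∫ φ
  have hφval : ∫ t in (0:ℝ)..1, φ t
      = (C * r * ω (1 / r)) * (Real.log r - Real.log (r - ρ)) := by
    rw [hφ, intervalIntegral.integral_const_mul]
    congr 1
    have hFder : ∀ t ∈ uIcc (0:ℝ) 1, HasDerivAt (fun t => -Real.log (r - t * ρ))
        (ρ / (r - t * ρ)) t := by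
      intro t ht
      rw [uIcc_of_le zero_le_one] at ht
      have hpos := (hkey t ht).2.2
      have hinner : HasDerivAt (fun t : ℝ => r - t * ρ) (-ρ) t := by
        simpa using (hasDerivAt_mul_const ρ (x := t)).const_sub r
      have := (Real.hasDerivAt_log hpos.ne').comp t hinner
      refine (congrArg (HasDerivAt _ · t) ?_).mpr this.neg
      field_simp
    have hcont2 : IntervalIntegrable (fun t => ρ / (r - t * ρ)) volume 0 1 := by
      apply ContinuousOn.intervalIntegrable
      rw [uIcc_of_le zero_le_one]
      apply continuousOn_const.div
      · exact (continuous_const.sub (continuous_id.mul continuous_const)).continuousOn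
      · exact fun t ht => (hkey t ht).2.2.ne'
    rw [intervalIntegral.integral_eq_sub_of_hasDerivAt hFder hcont2]
    simp only [one_mul, zero_mul, sub_zero]
    ring
  rw [← hftc]
  calc |∫ t in (0:ℝ)..1, d t| ≤ ∫ t in (0:ℝ)..1, |d t| := habs
    _ ≤ ∫ t in (0:ℝ)..1, φ t := hmono_int
    _ = _ := by rw [hφval]

theorem stmt_9 {n : ℕ} (ω : ℝ → ℝ) (hω : Majorant ω)
    (f : EuclideanSpace ℝ (Fin n) → ℝ)
    (hf : ContDiffOn ℝ 1 f (ball (0 : EuclideanSpace ℝ (Fin n)) 1))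
    (C : ℝ) (hC : 0 < C)
    (hgrad : ∀ x ∈ ball (0 : EuclideanSpace ℝ (Fin n)) 1,
      ‖gradient f x‖ ≤ C * ω (1 / (1 - ‖x‖))) :
    ∀ x ∈ ball (0 : EuclideanSpace ℝ (Fin n)) 1, ∀ r : ℝ, 0 < r → r ≤ 1 - ‖x‖ →
      (volume (ball x r)).toReal⁻¹ * ∫ ζ in ball x r, |f ζ - f x| ≤
        (C * Real.sqrt n * ∑ j ∈ Finset.range n, (1 : ℝ) / (j + 1)) * r * ω (1 / r) := by
  intro x hx r hr hr1
  have hω1r : 0 ≤ ω (1 / r) := aux_omega_nonneg hω (by positivity)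
  rcases Nat.eq_zero_or_pos n with hn | hn
  · -- trivial case n = 0
    subst hn
    haveI : Subsingleton (EuclideanSpace ℝ (Fin 0)) :=
      ⟨fun a b => by ext i; exact Fin.elim0 i⟩
    have hfz : (fun ζ => |f ζ - f x|) = fun _ => (0:ℝ) := by
      funext ζ
      rw [Subsingleton.elim ζ x]
      simp
    rw [hfz, integral_zero]
    simp
  -- main case
  set H : ℝ := ∑ j ∈ Finset.range n, (1:ℝ) / (j + 1) with hH
  have hH0 : 0 ≤ H := Finset.sum_nonneg fun j _ => by positivity
  set K : ℝ := C * r * ω (1 / r) with hK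
  have hK0 : 0 ≤ K := by positivity
  set g : EuclideanSpace ℝ (Fin n) → ℝ := fun ζ => Real.log r - Real.log (r - ‖ζ - x‖) with hg
  have hgm : Measurable g := by
    apply Measurable.sub measurable_const
    exact Real.measurable_log.comp (measurable_const.sub
      ((continuous_id.sub continuous_const).norm.measurable))
  have hsub : ball x r ⊆ ball (0 : EuclideanSpace ℝ (Fin n)) 1 := by
    intro ζ hζ
    rw [mem_ball_zero_iff]
    have h1 : ‖ζ - x‖ < r := by rwa [mem_ball, dist_eq_norm] at hζ
    calc ‖ζ‖ = ‖x + (ζ - x)‖ := by rw [show x + (ζ - x) = ζ from by abel]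
      _ ≤ ‖x‖ + ‖ζ - x‖ := norm_add_le _ _
      _ < 1 := by linarith
  have hFm : AEStronglyMeasurable (fun ζ => |f ζ - f x|) (volume.restrict (ball x r)) := by
    have hc : ContinuousOn (fun ζ => |f ζ - f x|) (ball x r) :=
      ((hf.continuousOn.mono hsub).sub (continuousOn_const (c := f x))).abs
    exact hc.aestronglyMeasurable measurableSet_ball
  have hFnn : 0 ≤ᵐ[volume.restrict (ball x r)] fun ζ => |f ζ - f x| :=
    ae_of_all _ fun ζ => abs_nonneg _
  have hI : ∫ ζ in ball x r, |f ζ - f x|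
      = (∫⁻ ζ in ball x r, ENNReal.ofReal |f ζ - f x|).toReal :=
    integral_eq_lintegral_of_nonneg_ae hFnn hFm
  have hlin1 : ∫⁻ ζ in ball x r, ENNReal.ofReal |f ζ - f x|
      ≤ ∫⁻ ζ in ball x r, ENNReal.ofReal (K * g ζ) := by
    apply lintegral_mono_ae
    filter_upwards [ae_restrict_mem measurableSet_ball] with ζ hζ
    exact ENNReal.ofReal_le_ofReal (aux_pointwise ω hω f hf C hC hgrad x hx hr hr1 ζ hζ)
  have hlin2 : ∫⁻ ζ in ball x r, ENNReal.ofReal (K * g ζ)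
      = ENNReal.ofReal K * ∫⁻ ζ in ball x r, ENNReal.ofReal (g ζ) := by
    simp_rw [ENNReal.ofReal_mul hK0]
    exact lintegral_const_mul _ (hgm.ennreal_ofReal)
  have hlin3 : ∫⁻ ζ in ball x r, ENNReal.ofReal (g ζ)
      ≤ ENNReal.ofReal H * volume (ball x r) := aux_lintegral_log_ball hn x hr
  have hvol_top : volume (ball x r) ≠ ⊤ := measure_ball_lt_top.ne
  have hvol_pos : 0 < (volume (ball x r)).toReal :=
    ENNReal.toReal_pos (measure_ball_pos volume x hr).ne' hvol_top
  have hbound_top : ENNReal.ofReal K * (ENNReal.ofReal H * volume (ball x r)) ≠ ⊤ :=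
    ENNReal.mul_ne_top ENNReal.ofReal_ne_top (ENNReal.mul_ne_top ENNReal.ofReal_ne_top hvol_top)
  have hItoReal : ∫ ζ in ball x r, |f ζ - f x|
      ≤ K * (H * (volume (ball x r)).toReal) := by
    rw [hI]
    have hle : ∫⁻ ζ in ball x r, ENNReal.ofReal |f ζ - f x|
        ≤ ENNReal.ofReal K * (ENNReal.ofReal H * volume (ball x r)) := by
      calc _ ≤ _ := hlin1
        _ = _ := hlin2
        _ ≤ _ := mul_le_mul_right hlin3 _
    calc (∫⁻ ζ in ball x r, ENNReal.ofReal |f ζ - f x|).toReal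
        ≤ (ENNReal.ofReal K * (ENNReal.ofReal H * volume (ball x r))).toReal :=
          ENNReal.toReal_mono hbound_top hle
      _ = K * (H * (volume (ball x r)).toReal) := by
          rw [ENNReal.toReal_mul, ENNReal.toReal_mul, ENNReal.toReal_ofReal hK0,
            ENNReal.toReal_ofReal hH0]
  have hsqrt : 1 ≤ Real.sqrt n := by
    rw [show (1:ℝ) = Real.sqrt 1 by simp]
    exact Real.sqrt_le_sqrt (by exact_mod_cast hn)
  calc (volume (ball x r)).toReal⁻¹ * ∫ ζ in ball x r, |f ζ - f x|
      ≤ (volume (ball x r)).toReal⁻¹ * (K * (H * (volume (ball x r)).toReal)) :=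
        mul_le_mul_of_nonneg_left hItoReal (by positivity)
    _ = K * H := by field_simp
    _ = (C * 1 * H) * r * ω (1 / r) := by rw [hK]; ring
    _ ≤ (C * Real.sqrt n * H) * r * ω (1 / r) := by
        apply mul_le_mul_of_nonneg_right _ hω1r
        apply mul_le_mul_of_nonneg_right _ hr.le
        apply mul_le_mul_of_nonneg_right _ hH0
        exact mul_le_mul_of_nonneg_left hsqrt hC.le
end
end
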